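/- arXiv:2004.02560 — 9 statements merged into one kernel-verified Lean document; each statement's English description precedes it below -/
import Mathlib

section
/- Let (P,·,{-,-}) be a noncommutative Poisson algebra and (V;L,R,ρ) a quasi-representation of P. Define maps on the dual space V* by 𝓛_x = (R_x)ᵀ, 𝓡_x = (L_x)ᵀ and ρ̂(x) = −(ρ(x))ᵀ, where fᵀ denotes the transpose of a linear endomorphism f of V acting on V* (⟨fᵀα, v⟩ = ⟨α, f v⟩). Then (V*; 𝓛, 𝓡, ρ̂) is a quasi-representation of P. -/
open LinearMap Module

/-- `(P, mul, br)` is a noncommutative Poisson algebra: `mul` is an associative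
bilinear multiplication, `br` is a bilinear Lie bracket (skew-symmetric and
satisfying the Jacobi identity), and the Leibniz rule holds. -/
def IsNCPoisson (K : Type*) [Field K] {P : Type*} [AddCommGroup P] [Module K P]
    (mul br : P →ₗ[K] P →ₗ[K] P) : Prop :=
  (∀ x y z, mul (mul x y) z = mul x (mul y z)) ∧
  (∀ x y, br x y = - br y x) ∧
  (∀ x y z, br (br x y) z + br (br y z) x + br (br z x) y = 0) ∧
  (∀ x y z, br x (mul y z) = mul (br x y) z + mul y (br x z))

/-- `(V; L, R, ρ)` is a quasi-representation of the noncommutative Poisson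
algebra `(P, mul, br)`. -/
def IsQuasiRep (K : Type*) [Field K] {P V : Type*} [AddCommGroup P] [Module K P]
    [AddCommGroup V] [Module K V] (mul br : P →ₗ[K] P →ₗ[K] P)
    (L R ρ : P →ₗ[K] Module.End K V) : Prop :=
  (∀ x y, L (mul x y) = L x * L y) ∧
  (∀ x y, R (mul x y) = R y * R x) ∧
  (∀ x y, L x * R y = R y * L x) ∧
  (∀ x y, ρ (br x y) = ρ x * ρ y - ρ y * ρ x) ∧
  (∀ x y, L (br x y) = ρ x * L y - L y * ρ x) ∧
  (∀ x y, R (br x y) = ρ x * R y - R y * ρ x)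

/-- `(V; L, R, ρ)` is a representation of the noncommutative Poisson algebra
`(P, mul, br)`: a quasi-representation with `ρ(x·y) = L_x ∘ ρ(y) + R_y ∘ ρ(x)`. -/
def IsRep (K : Type*) [Field K] {P V : Type*} [AddCommGroup P] [Module K P]
    [AddCommGroup V] [Module K V] (mul br : P →ₗ[K] P →ₗ[K] P)
    (L R ρ : P →ₗ[K] Module.End K V) : Prop :=
  IsQuasiRep K mul br L R ρ ∧ (∀ x y, ρ (mul x y) = L x * ρ y + R y * ρ x)

/-- the dual quasi-representation `(V*; Rᵀ, Lᵀ, -ρᵀ)` of a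
quasi-representation `(V; L, R, ρ)` of a noncommutative Poisson algebra. -/
theorem dual_isQuasiRep {K P V : Type*} [Field K] [CharZero K]
    [AddCommGroup P] [Module K P] [AddCommGroup V] [Module K V]
    (mul br : P →ₗ[K] P →ₗ[K] P) (L R ρ : P →ₗ[K] Module.End K V)
    (hP : IsNCPoisson K mul br) (hq : IsQuasiRep K mul br L R ρ) :
    IsQuasiRep K mul br
      (Module.Dual.transpose (R := K) ∘ₗ R)
      (Module.Dual.transpose (R := K) ∘ₗ L)
      (Module.Dual.transpose (R := K) ∘ₗ (-ρ)) := by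
  obtain ⟨h1, h2, h3, h4, h5, h6⟩ := hq
  refine ⟨?_, ?_, ?_, ?_, ?_, ?_⟩ <;> intro x y <;>
    ext f v <;>
    simp only [LinearMap.comp_apply, Module.Dual.transpose_apply, Module.End.mul_apply,
      LinearMap.neg_apply, LinearMap.sub_apply, h1, h2, h3, h4, h5, h6,
      LinearMap.dualMap_apply, LinearMap.comp_apply]
  · exact congrArg f (DFunLike.congr_fun (h3 y x) v)
  all_goals
    simp only [Module.End.mul_apply, map_add, map_sub, map_neg, map_smul, neg_neg]
    abel
end

section
/- Let (P,·,{-,-}) be a noncommutative Poisson algebra and (V;L,R,ρ) a quasi-representation of P that in addition satisfies ρ(x·y) = ρ(x)∘L_y + ρ(y)∘R_x for all x,y ∈ P. Define maps on the dual space V* by 𝓛_x = (R_x)ᵀ, 𝓡_x = (L_x)ᵀ and ρ̂(x) = −(ρ(x))ᵀ, where fᵀ denotes the transpose of a linear endomorphism f of V acting on V*. Then (V*; 𝓛, 𝓡, ρ̂) is a representation of P, i.e. a quasi-representation satisfying ρ̂(x·y) = 𝓛_x∘ρ̂(y) + 𝓡_y∘ρ̂(x). -/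
open LinearMap Module

lemma aux1 {A : Type*} [Ring A] (a b : A) : -(b * a - a * b) = -a * -b - -b * -a := by
  noncomm_ring

lemma aux2 {A : Type*} [Ring A] (a r : A) : r * a - a * r = -a * r - r * -a := by
  noncomm_ring

lemma aux3 {A : Type*} [Ring A] (a b c d : A) : -(b * a + c * d) = c * -d + b * -a := by
  noncomm_ring

/-- if a quasi-representation `(V; L, R, ρ)` of a noncommutative
Poisson algebra satisfies `ρ(x·y) = ρ(x)∘L_y + ρ(y)∘R_x`, then the dual triple
`(V*; Rᵀ, Lᵀ, -ρᵀ)` is a representation. -/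
theorem dual_isRep {K P V : Type*} [Field K] [CharZero K]
    [AddCommGroup P] [Module K P] [AddCommGroup V] [Module K V]
    (mul br : P →ₗ[K] P →ₗ[K] P) (L R ρ : P →ₗ[K] Module.End K V)
    (hP : IsNCPoisson K mul br) (hq : IsQuasiRep K mul br L R ρ)
    (hco : ∀ x y, ρ (mul x y) = ρ x * L y + ρ y * R x) :
    IsRep K mul br
      (Module.Dual.transpose (R := K) ∘ₗ R)
      (Module.Dual.transpose (R := K) ∘ₗ L)
      (Module.Dual.transpose (R := K) ∘ₗ (-ρ)) := by

  obtain ⟨h1, h2, h3, h4, h5, h6⟩ := hq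
  have T : ∀ f g : Module.End K V,
      Dual.transpose (R := K) (f * g) =
        Dual.transpose (R := K) g * Dual.transpose (R := K) f := by
    intro f g
    rw [Module.End.mul_eq_comp, Dual.transpose_comp, ← Module.End.mul_eq_comp]
  refine ⟨⟨?_, ?_, ?_, ?_, ?_, ?_⟩, ?_⟩ <;> intro x y <;>
    simp only [LinearMap.comp_apply, LinearMap.neg_apply, map_neg, map_sub, map_add,
      h1, h2, h4, h5, h6, hco, T]
  · rw [← T, ← T, h3]
  · exact aux1 (A := Module.End K (Dual K V)) _ _
  · exact aux2 (A := Module.End K (Dual K V)) _ _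
  · exact aux2 (A := Module.End K (Dual K V)) _ _
  · exact aux3 (A := Module.End K (Dual K V)) _ _ _ _
end

section
/- Let (P,·,{-,-}) be a noncommutative Poisson algebra. Let L_x y = x·y, R_x y = y·x and ad_x y = {x,y}, and define on the dual space P* the maps 𝓛_x = (R_x)ᵀ, 𝓡_x = (L_x)ᵀ and ρ̂(x) = −(ad_x)ᵀ, where fᵀ denotes the transpose of a linear endomorphism f of P acting on P*. Then (P*; 𝓛, 𝓡, ρ̂) is a representation of P (i.e. satisfies ρ̂(x·y) = 𝓛_x∘ρ̂(y) + 𝓡_y∘ρ̂(x) in addition to the quasi-representation axioms) if and only if {x, y·z} + {y, z·x} + {z, x·y} = 0 for all x,y,z ∈ P. -/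
open LinearMap Module

/-- for a noncommutative Poisson algebra `(P, mul, br)`, the dual
`(P*; Rᵀ, Lᵀ, -adᵀ)` of the regular representation `(P; L, R, ad)` is a
representation of `P` if and only if `P` is coherent, i.e.
`{x, y·z} + {y, z·x} + {z, x·y} = 0` for all `x, y, z`. -/
theorem dual_regular_isRep_iff_coherent {K P : Type*} [Field K] [CharZero K]
    [AddCommGroup P] [Module K P]
    (mul br : P →ₗ[K] P →ₗ[K] P) (hP : IsNCPoisson K mul br) :
    IsRep K mul br
      (Module.Dual.transpose (R := K) ∘ₗ mul.flip)
      (Module.Dual.transpose (R := K) ∘ₗ mul)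
      (Module.Dual.transpose (R := K) ∘ₗ (-br)) ↔
    (∀ x y z, br x (mul y z) + br y (mul z x) + br z (mul x y) = 0) := by
  obtain ⟨hassoc, hskew, hjac, hleib⟩ := hP
  constructor
  · rintro ⟨-, hmul⟩ x y z
    refine (Module.forall_dual_apply_eq_zero_iff K _).mp fun φ => ?_
    have h := LinearMap.congr_fun (LinearMap.congr_fun (hmul x y) φ) z
    simp only [LinearMap.comp_apply, LinearMap.flip_apply, Module.End.mul_apply,
      LinearMap.add_apply, LinearMap.neg_apply, Module.Dual.transpose_apply,
      map_neg, map_add] at h ⊢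
    have hsk := congrArg φ (hskew (mul x y) z)
    rw [map_neg] at hsk
    linear_combination h + hsk
  · intro hcoh
    have hsk : ∀ (φ : Dual K P) (a b : P), φ (br a b) = - φ (br b a) := by
      intro φ a b; rw [hskew a b, map_neg]
    refine ⟨⟨?_, ?_, ?_, ?_, ?_, ?_⟩, ?_⟩ <;>
      intro x y <;> ext φ w <;>
      simp only [LinearMap.comp_apply, LinearMap.flip_apply, Module.End.mul_apply,
        LinearMap.add_apply, LinearMap.sub_apply, LinearMap.neg_apply,
        Module.Dual.transpose_apply, map_neg, map_add, map_sub]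
    · rw [← hassoc]
    · rw [hassoc]
    · rw [← hassoc]
    · have hj := congrArg φ (hjac x y w)
      simp only [map_add, map_zero] at hj
      have hA : φ (br y (br x w)) = φ (br (br w x) y) := by
        rw [hskew y (br x w), hskew x w]; simp
      have hB : φ (br x (br y w)) = - φ (br (br y w) x) := hsk φ x (br y w)
      linear_combination -hj - hA + hB
    · have hl := congrArg φ (hleib x w y)
      simp only [map_add] at hl
      linear_combination -hl
    · have hl := congrArg φ (hleib x y w)
      simp only [map_add] at hl
      linear_combination -hl
    · have hc := congrArg φ (hcoh x y w)
      simp only [map_add, map_zero] at hc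
      linear_combination hc - hsk φ w (mul x y)
end

section
/- Let (P,·,{-,-}) be a coherent noncommutative Poisson algebra and let [x,y] = x·y − y·x be the commutator bracket. Then (P,{-,-},[-,-]) is a compatible Lie algebra: for all scalars k₁,k₂ ∈ K, the bilinear operation k₁{x,y} + k₂[x,y] is a Lie bracket on P. -/
open LinearMap Module

/-- A bilinear map `br` is a Lie bracket: skew-symmetric and satisfying the
Jacobi identity. -/
def IsLieBracket (K : Type*) [Field K] {g : Type*} [AddCommGroup g] [Module K g]
    (br : g →ₗ[K] g →ₗ[K] g) : Prop :=
  (∀ x y, br x y = - br y x) ∧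
  (∀ x y z, br (br x y) z + br (br y z) x + br (br z x) y = 0)

/-- a coherent noncommutative Poisson algebra gives a compatible
Lie algebra `(P, {-,-}, [-,-])`, where `[x,y] = x·y - y·x`: every linear
combination `k₁{-,-} + k₂[-,-]` is a Lie bracket. -/
theorem coherent_gives_compatible_lie {K P : Type*} [Field K] [CharZero K]
    [AddCommGroup P] [Module K P]
    (mul br : P →ₗ[K] P →ₗ[K] P) (hP : IsNCPoisson K mul br)
    (hcoh : ∀ x y z, br x (mul y z) + br y (mul z x) + br z (mul x y) = 0) :
    ∀ k₁ k₂ : K, IsLieBracket K (k₁ • br + k₂ • (mul - mul.flip)) := by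
  obtain ⟨hassoc, hskew, hjac, hleib⟩ := hP
  intro k₁ k₂
  constructor
  · intro x y
    simp only [LinearMap.add_apply, LinearMap.smul_apply, LinearMap.sub_apply, flip_apply]
    linear_combination (norm := module) k₁ • hskew x y
  · intro x y z
    have m1 : mul y (br x z) = - mul y (br z x) := by rw [hskew x z]; simp
    have m2 : mul (br x z) y = - mul (br z x) y := by rw [hskew x z]; simp
    have m3 : mul z (br y x) = - mul z (br x y) := by rw [hskew y x]; simp
    have m4 : mul (br y x) z = - mul (br x y) z := by rw [hskew y x]; simp
    have m5 : mul x (br z y) = - mul x (br y z) := by rw [hskew z y]; simp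
    have m6 : mul (br z y) x = - mul (br y z) x := by rw [hskew z y]; simp
    have hP13 : (mul (br x y) z - mul z (br x y)) + (mul (br z x) y - mul y (br z x))
        = br x (mul y z) - br x (mul z y) := by
      linear_combination (norm := module) hleib x z y - hleib x y z - m1 + m2
    have hP21 : (mul (br y z) x - mul x (br y z)) + (mul (br x y) z - mul z (br x y))
        = br y (mul z x) - br y (mul x z) := by
      linear_combination (norm := module) hleib y x z - hleib y z x - m3 + m4
    have hP32 : (mul (br z x) y - mul y (br z x)) + (mul (br y z) x - mul x (br y z))
        = br z (mul x y) - br z (mul y x) := by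
      linear_combination (norm := module) hleib z y x - hleib z x y - m5 + m6
    have h2 : ((mul (br x y) z - mul z (br x y)) + (mul (br y z) x - mul x (br y z))
          + (mul (br z x) y - mul y (br z x)))
        + ((mul (br x y) z - mul z (br x y)) + (mul (br y z) x - mul x (br y z))
          + (mul (br z x) y - mul y (br z x))) = 0 := by
      linear_combination (norm := module) hP13 + hP21 + hP32 + hcoh x y z - hcoh x z y
    have hD : (mul (br x y) z - mul z (br x y)) + (mul (br y z) x - mul x (br y z))
          + (mul (br z x) y - mul y (br z x)) = 0 := by
      have h3 : (2 : K) • ((mul (br x y) z - mul z (br x y)) + (mul (br y z) x - mul x (br y z))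
          + (mul (br z x) y - mul y (br z x))) = 0 := by rw [two_smul]; exact h2
      exact (smul_eq_zero.mp h3).resolve_left (by norm_num)
    have s1 := hskew (mul x y) z
    have s2 := hskew (mul y z) x
    have s3 := hskew (mul z x) y
    have s4 := hskew (mul y x) z
    have s5 := hskew (mul z y) x
    have s6 := hskew (mul x z) y
    simp only [LinearMap.add_apply, LinearMap.smul_apply, LinearMap.sub_apply, flip_apply,
      map_add, map_smul, map_sub, smul_add, smul_sub]
    linear_combination (norm := module) (k₁*k₁) • hjac x y z
      + (k₁*k₂) • hD
      + (k₁*k₂) • (s1 + s2 + s3 - s4 - s5 - s6)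
      - (k₁*k₂) • hcoh x y z + (k₁*k₂) • hcoh x z y
      + (k₂*k₂) • (hassoc x y z - hassoc y x z + hassoc y z x - hassoc z y x
          + hassoc z x y - hassoc x z y)
end

section
/- Let (P,·,{-,-}) be a coherent noncommutative Poisson algebra, ħ ∈ K, and let {x,y}_ħ = ħ(x·y − y·x) be the standard bracket of the associative multiplication ·. Then for all scalars k₁,k₂ ∈ K, the triple (P, (k₁+k₂)·, k₁{-,-} + k₂{-,-}_ħ), i.e. P with multiplication x∘y = k₁(x·y) + k₂(x·y) and bracket ⟪x,y⟫ = k₁{x,y} + k₂{x,y}_ħ, is again a coherent noncommutative Poisson algebra. -/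
open LinearMap Module

/-- a coherent noncommutative Poisson algebra `(P, mul, br)` is
compatible with its standard noncommutative Poisson algebra
`(P, mul, hbar(mul - mulᵒᵖ))`: for all `k₁ k₂`, the multiplication
`k₁·mul + k₂·mul` and bracket `k₁·br + k₂·{-,-}_hbar` form a coherent
noncommutative Poisson algebra. -/
theorem standard_compatible {K P : Type*} [Field K] [CharZero K]
    [AddCommGroup P] [Module K P]
    (mul br : P →ₗ[K] P →ₗ[K] P) (hP : IsNCPoisson K mul br)
    (hcoh : ∀ x y z, br x (mul y z) + br y (mul z x) + br z (mul x y) = 0)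
    (hbar : K) :
    ∀ k₁ k₂ : K,
      IsNCPoisson K (k₁ • mul + k₂ • mul)
        (k₁ • br + k₂ • (hbar • (mul - mul.flip))) ∧
      (∀ x y z,
        (k₁ • br + k₂ • (hbar • (mul - mul.flip))) x ((k₁ • mul + k₂ • mul) y z) +
        (k₁ • br + k₂ • (hbar • (mul - mul.flip))) y ((k₁ • mul + k₂ • mul) z x) +
        (k₁ • br + k₂ • (hbar • (mul - mul.flip))) z ((k₁ • mul + k₂ • mul) x y) = 0) := by
  obtain ⟨hassoc, hskew, hjac, hleib⟩ := hP
  -- cyclic sum with product in the first slot of the bracket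
  have l1 : ∀ x y z : P, br (mul x y) z + br (mul y z) x + br (mul z x) y = 0 := by
    intro x y z
    rw [hskew (mul x y) z, hskew (mul y z) x, hskew (mul z x) y]
    have := hcoh z x y
    linear_combination (norm := module) (-1 : K) • this
  -- cyclic sum with reversed product in the first slot of the bracket
  have l2 : ∀ x y z : P, br (mul y x) z + br (mul z y) x + br (mul x z) y = 0 := by
    intro x y z
    rw [hskew (mul y x) z, hskew (mul z y) x, hskew (mul x z) y]
    have := hcoh z y x
    linear_combination (norm := module) (-1 : K) • this
  -- cyclic sum of commutators of products with brackets
  have l3 : ∀ x y z : P,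
      (mul (br x y) z - mul z (br x y)) + (mul (br y z) x - mul x (br y z)) +
        (mul (br z x) y - mul y (br z x)) = 0 := by
    intro x y z
    have h := hcoh x y z
    rw [hleib x y z, hleib y z x, hleib z x y] at h
    rw [hskew x z, hskew y x, hskew z y] at h
    simp only [map_neg] at h
    linear_combination (norm := module) h
  -- commutator Jacobi identity
  have l4 : ∀ x y z : P,
      mul (mul x y) z - mul (mul y x) z - mul z (mul x y) + mul z (mul y x) +
        (mul (mul y z) x - mul (mul z y) x - mul x (mul y z) + mul x (mul z y)) +
        (mul (mul z x) y - mul (mul x z) y - mul y (mul z x) + mul y (mul x z)) = 0 := by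
    intro x y z
    simp only [hassoc]
    abel
  -- commutator Leibniz identity
  have l6 : ∀ x y z : P,
      mul x (mul y z) - mul (mul y z) x =
        mul (mul x y) z - mul (mul y x) z + mul y (mul x z) - mul y (mul z x) := by
    intro x y z
    simp only [map_sub, hassoc]
    abel
  -- commutator coherence
  have l5 : ∀ x y z : P,
      (mul x (mul y z) - mul (mul y z) x) + (mul y (mul z x) - mul (mul z x) y) +
        (mul z (mul x y) - mul (mul x y) z) = 0 := by
    intro x y z
    simp only [hassoc]
    abel
  intro k₁ k₂
  refine ⟨⟨?_, ?_, ?_, ?_⟩, ?_⟩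
  · intro x y z
    simp only [LinearMap.add_apply, LinearMap.smul_apply, map_add, map_smul]
    simp only [hassoc]
  · intro x y
    simp only [LinearMap.add_apply, LinearMap.smul_apply, LinearMap.sub_apply,
      LinearMap.flip_apply]
    rw [hskew x y]
    module
  · intro x y z
    simp only [LinearMap.add_apply, LinearMap.smul_apply, LinearMap.sub_apply,
      LinearMap.flip_apply, map_add, map_smul, map_sub]
    linear_combination (norm := module) (k₁ * k₁) • hjac x y z +
      (k₁ * (k₂ * hbar)) • l1 x y z - (k₁ * (k₂ * hbar)) • l2 x y z +
      (k₁ * (k₂ * hbar)) • l3 x y z + ((k₂ * hbar) * (k₂ * hbar)) • l4 x y z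
  · intro x y z
    simp only [LinearMap.add_apply, LinearMap.smul_apply, LinearMap.sub_apply,
      LinearMap.flip_apply, map_add, map_smul, map_sub]
    linear_combination (norm := module) (k₁ * (k₁ + k₂)) • hleib x y z +
      ((k₂ * hbar) * (k₁ + k₂)) • l6 x y z
  · intro x y z
    simp only [LinearMap.add_apply, LinearMap.smul_apply, LinearMap.sub_apply,
      LinearMap.flip_apply, map_add, map_smul, map_sub]
    linear_combination (norm := module) (k₁ * (k₁ + k₂)) • hcoh x y z +
      ((k₂ * hbar) * (k₁ + k₂)) • l5 x y z
end

section
/- Let (P,·,{-,-}) be a noncommutative Poisson algebra and (V;L,R,ρ) a representation of P. On the direct sum P ⊕ V define (x₁+v₁)∘(x₂+v₂) = x₁·x₂ + L_{x₁}v₂ + R_{x₂}v₁ and ⟪x₁+v₁, x₂+v₂⟫ = {x₁,x₂} + ρ(x₁)v₂ − ρ(x₂)v₁. Then (P ⊕ V, ∘, ⟪-,-⟫) is a noncommutative Poisson algebra (the semi-direct product). -/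
open LinearMap Module

/-- the semi-direct product of a noncommutative Poisson algebra
`(P, mul, br)` with a representation `(V; L, R, ρ)`: the bilinear operations on
`P ⊕ V` given by `(x₁+v₁)∘(x₂+v₂) = x₁·x₂ + L_{x₁}v₂ + R_{x₂}v₁` and
`⟪x₁+v₁, x₂+v₂⟫ = {x₁,x₂} + ρ(x₁)v₂ - ρ(x₂)v₁` form a noncommutative Poisson
algebra. -/
theorem semidirect_ncPoisson {K P V : Type*} [Field K] [CharZero K]
    [AddCommGroup P] [Module K P] [AddCommGroup V] [Module K V]
    (mul br : P →ₗ[K] P →ₗ[K] P) (L R ρ : P →ₗ[K] Module.End K V)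
    (hP : IsNCPoisson K mul br) (hrep : IsRep K mul br L R ρ) :
    ∃ mul' br' : (P × V) →ₗ[K] (P × V) →ₗ[K] (P × V),
      (∀ a b : P × V, mul' a b = (mul a.1 b.1, L a.1 b.2 + R b.1 a.2)) ∧
      (∀ a b : P × V, br' a b = (br a.1 b.1, ρ a.1 b.2 - ρ b.1 a.2)) ∧
      IsNCPoisson K mul' br' := by
  obtain ⟨hassoc, hskew, hjac, hleib⟩ := hP
  obtain ⟨⟨hL, hR, hLR, hρ, hρL, hρR⟩, hρm⟩ := hrep
  have hL' : ∀ x y v, L (mul x y) v = L x (L y v) := fun x y v =>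
    LinearMap.congr_fun (hL x y) v
  have hR' : ∀ x y v, R (mul x y) v = R y (R x v) := fun x y v =>
    LinearMap.congr_fun (hR x y) v
  have hLR' : ∀ x y v, L x (R y v) = R y (L x v) := fun x y v =>
    LinearMap.congr_fun (hLR x y) v
  have hρ' : ∀ x y v, ρ (br x y) v = ρ x (ρ y v) - ρ y (ρ x v) := fun x y v =>
    LinearMap.congr_fun (hρ x y) v
  have hρL' : ∀ x y v, L (br x y) v = ρ x (L y v) - L y (ρ x v) := fun x y v =>
    LinearMap.congr_fun (hρL x y) v
  have hρR' : ∀ x y v, R (br x y) v = ρ x (R y v) - R y (ρ x v) := fun x y v =>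
    LinearMap.congr_fun (hρR x y) v
  have hρm' : ∀ x y v, ρ (mul x y) v = L x (ρ y v) + R y (ρ x v) := fun x y v =>
    LinearMap.congr_fun (hρm x y) v
  refine ⟨LinearMap.mk₂ K (fun a b => (mul a.1 b.1, L a.1 b.2 + R b.1 a.2))
      (fun a a' b => by
        simp only [Prod.fst_add, Prod.snd_add, map_add, LinearMap.add_apply,
          Prod.mk_add_mk, Prod.mk.injEq]
        constructor <;> first | trivial | abel)
      (fun c a b => by
        simp only [Prod.smul_fst, Prod.smul_snd, map_smul, LinearMap.smul_apply,
          Prod.smul_mk, Prod.mk.injEq, smul_add])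
      (fun a b b' => by
        simp only [Prod.fst_add, Prod.snd_add, map_add, LinearMap.add_apply,
          Prod.mk_add_mk, Prod.mk.injEq]
        constructor <;> first | trivial | abel)
      (fun c a b => by
        simp only [Prod.smul_fst, Prod.smul_snd, map_smul, LinearMap.smul_apply,
          Prod.smul_mk, Prod.mk.injEq, smul_add]),
    LinearMap.mk₂ K (fun a b => (br a.1 b.1, ρ a.1 b.2 - ρ b.1 a.2))
      (fun a a' b => by
        simp only [Prod.fst_add, Prod.snd_add, map_add, LinearMap.add_apply,
          Prod.mk_add_mk, Prod.mk.injEq]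
        constructor <;> first | trivial | abel)
      (fun c a b => by
        simp only [Prod.smul_fst, Prod.smul_snd, map_smul, LinearMap.smul_apply,
          Prod.smul_mk, Prod.mk.injEq, smul_sub])
      (fun a b b' => by
        simp only [Prod.fst_add, Prod.snd_add, map_add, LinearMap.add_apply,
          Prod.mk_add_mk, Prod.mk.injEq]
        constructor <;> first | trivial | abel)
      (fun c a b => by
        simp only [Prod.smul_fst, Prod.smul_snd, map_smul, LinearMap.smul_apply,
          Prod.smul_mk, Prod.mk.injEq, smul_sub]),
    fun a b => rfl, fun a b => rfl, ?_, ?_, ?_, ?_⟩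
  · intro x y z
    simp only [LinearMap.mk₂_apply, Prod.mk.injEq]
    constructor
    · exact hassoc _ _ _
    · simp only [map_add, hL', hR', hLR']
      abel
  · intro x y
    simp only [LinearMap.mk₂_apply, Prod.neg_mk, Prod.mk.injEq]
    constructor
    · exact hskew _ _
    · abel
  · intro x y z
    simp only [LinearMap.mk₂_apply, Prod.mk_add_mk, Prod.mk.injEq]
    rw [Prod.ext_iff]
    constructor
    · exact hjac _ _ _
    · show _ = (0 : P × V).2
      simp only [map_add, map_sub, hρ', Prod.snd_zero]
      abel
  · intro x y z
    simp only [LinearMap.mk₂_apply, Prod.mk_add_mk, Prod.mk.injEq]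
    constructor
    · exact hleib _ _ _
    · simp only [map_add, map_sub, hρm', hρL', hρR']
      abel
end

section
/- Let (P,·,{-,-}) be a coherent noncommutative Poisson algebra and (V;L,R,ρ) a representation of P that additionally satisfies ρ(x·y) = ρ(x)∘L_y + ρ(y)∘R_x for all x,y ∈ P. Then the semi-direct product noncommutative Poisson algebra on P ⊕ V, with multiplication (x₁+v₁)∘(x₂+v₂) = x₁·x₂ + L_{x₁}v₂ + R_{x₂}v₁ and bracket ⟪x₁+v₁, x₂+v₂⟫ = {x₁,x₂} + ρ(x₁)v₂ − ρ(x₂)v₁, is coherent. -/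
open LinearMap Module

/-- if `(P, mul, br)` is a coherent noncommutative Poisson
algebra and the representation `(V; L, R, ρ)` additionally satisfies
`ρ(x·y) = ρ(x)∘L_y + ρ(y)∘R_x`, then the semi-direct product noncommutative
Poisson algebra on `P ⊕ V` is coherent. -/
theorem semidirect_coherent {K P V : Type*} [Field K] [CharZero K]
    [AddCommGroup P] [Module K P] [AddCommGroup V] [Module K V]
    (mul br : P →ₗ[K] P →ₗ[K] P) (L R ρ : P →ₗ[K] Module.End K V)
    (hP : IsNCPoisson K mul br)
    (hcoh : ∀ x y z, br x (mul y z) + br y (mul z x) + br z (mul x y) = 0)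
    (hrep : IsRep K mul br L R ρ)
    (hcond : ∀ x y, ρ (mul x y) = ρ x * L y + ρ y * R x) :
    ∃ mul' br' : (P × V) →ₗ[K] (P × V) →ₗ[K] (P × V),
      (∀ a b : P × V, mul' a b = (mul a.1 b.1, L a.1 b.2 + R b.1 a.2)) ∧
      (∀ a b : P × V, br' a b = (br a.1 b.1, ρ a.1 b.2 - ρ b.1 a.2)) ∧
      IsNCPoisson K mul' br' ∧
      (∀ a b c : P × V,
        br' a (mul' b c) + br' b (mul' c a) + br' c (mul' a b) = 0) := by
  obtain ⟨hassoc, hskew, hjac, hleib⟩ := hP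
  obtain ⟨⟨hL, hR, hLR, hρbr, hLbr, hRbr⟩, hρmul⟩ := hrep
  refine ⟨LinearMap.mk₂ K (fun a b => (mul a.1 b.1, L a.1 b.2 + R b.1 a.2))
    (fun a a' b => by
      refine Prod.ext ?_ ?_ <;>
        simp only [map_add, LinearMap.add_apply, Prod.fst_add, Prod.snd_add] <;> abel)
    (fun c a b => by
      refine Prod.ext ?_ ?_ <;>
        simp only [map_smul, LinearMap.smul_apply, 
          Prod.smul_fst, Prod.smul_snd, smul_add])
    (fun a b b' => by
      refine Prod.ext ?_ ?_ <;>
        simp only [map_add, LinearMap.add_apply, Prod.fst_add, Prod.snd_add] <;> abel)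
    (fun c a b => by
      refine Prod.ext ?_ ?_ <;>
        simp only [map_smul, LinearMap.smul_apply, 
          Prod.smul_fst, Prod.smul_snd, smul_add]),
    LinearMap.mk₂ K (fun a b => (br a.1 b.1, ρ a.1 b.2 - ρ b.1 a.2))
    (fun a a' b => by
      refine Prod.ext ?_ ?_ <;>
        simp only [map_add, LinearMap.add_apply, Prod.fst_add, Prod.snd_add] <;> abel)
    (fun c a b => by
      refine Prod.ext ?_ ?_ <;>
        simp only [map_smul, LinearMap.smul_apply, 
          Prod.smul_fst, Prod.smul_snd, smul_sub])
    (fun a b b' => by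
      refine Prod.ext ?_ ?_ <;>
        simp only [map_add, LinearMap.add_apply, Prod.fst_add, Prod.snd_add] <;> abel)
    (fun c a b => by
      refine Prod.ext ?_ ?_ <;>
        simp only [map_smul, LinearMap.smul_apply, 
          Prod.smul_fst, Prod.smul_snd, smul_sub]),
    fun a b => rfl, fun a b => rfl, ⟨?_, ?_, ?_, ?_⟩, ?_⟩
  · intro x y z
    refine Prod.ext (hassoc _ _ _) ?_
    simp only [LinearMap.mk₂_apply, hL, hR, Module.End.mul_apply, map_add]
    have h := congrFun (congrArg DFunLike.coe (hLR x.1 z.1)) y.2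
    simp only [Module.End.mul_apply] at h
    rw [h]; abel
  · intro x y
    refine Prod.ext (hskew _ _) ?_
    simp only [LinearMap.mk₂_apply, Prod.snd_neg]
    abel
  · intro x y z
    refine Prod.ext ?_ ?_ <;>
      simp only [LinearMap.mk₂_apply, Prod.fst_add, Prod.snd_add, Prod.fst_zero,
        Prod.snd_zero, hρbr, LinearMap.sub_apply, Module.End.mul_apply, map_sub]
    · exact hjac _ _ _
    · abel
  · intro x y z
    refine Prod.ext (hleib _ _ _) ?_
    simp only [LinearMap.mk₂_apply, Prod.snd_add, hρmul, hLbr, hRbr,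
      LinearMap.sub_apply, LinearMap.add_apply, Module.End.mul_apply, map_add, map_sub]
    abel
  · intro x y z
    refine Prod.ext ?_ ?_ <;>
      simp only [LinearMap.mk₂_apply, Prod.fst_add, Prod.snd_add, Prod.fst_zero,
        Prod.snd_zero, hcond, LinearMap.add_apply, Module.End.mul_apply, map_add, map_sub]
    · exact hcoh _ _ _
    · abel
end

section
/- Let (A,≻,≺,∗) be a noncommutative pre-Poisson algebra with sub-adjacent noncommutative Poisson algebra A^c given by x·y = x≻y + x≺y and {x,y} = x∗y − y∗x. Define linear maps L_≻, R_≺, L : A → End(A) by L_≻(x)(y) = x≻y, R_≺(x)(y) = y≺x, L(x)(y) = x∗y. Then (A; L_≻, R_≺, L) is a representation of A^c: L_≻(x·y) = L_≻(x)∘L_≻(y), R_≺(x·y) = R_≺(y)∘R_≺(x), L_≻(x)∘R_≺(y) = R_≺(y)∘L_≻(x), L({x,y}) = L(x)∘L(y) − L(y)∘L(x), L_≻({x,y}) = L(x)∘L_≻(y) − L_≻(y)∘L(x), R_≺({x,y}) = L(x)∘R_≺(y) − R_≺(y)∘L(x), and L(x·y) = L_≻(x)∘L(y) + R_≺(y)∘L(x)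 for all x,y ∈ A. -/
open LinearMap Module

/-- `(A, succ, prec)` is a dendriform algebra. -/
def IsDendriform (K : Type*) [Field K] {A : Type*} [AddCommGroup A] [Module K A]
    (succ prec : A →ₗ[K] A →ₗ[K] A) : Prop :=
  (∀ x y z, prec (prec x y) z = prec x (succ y z + prec y z)) ∧
  (∀ x y z, prec (succ x y) z = succ x (prec y z)) ∧
  (∀ x y z, succ x (succ y z) = succ (succ x y + prec x y) z)

/-- `(A, ast)` is a pre-Lie algebra. -/
def IsPreLie (K : Type*) [Field K] {A : Type*} [AddCommGroup A] [Module K A]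
    (ast : A →ₗ[K] A →ₗ[K] A) : Prop :=
  ∀ x y z, ast (ast x y) z - ast x (ast y z) = ast (ast y x) z - ast y (ast x z)

/-- `(A, succ, prec, ast)` is a noncommutative pre-Poisson algebra. -/
def IsNCPrePoisson (K : Type*) [Field K] {A : Type*} [AddCommGroup A] [Module K A]
    (succ prec ast : A →ₗ[K] A →ₗ[K] A) : Prop :=
  IsDendriform K succ prec ∧ IsPreLie K ast ∧
  (∀ x y z, succ (ast x y - ast y x) z = ast x (succ y z) - succ y (ast x z)) ∧
  (∀ x y z, prec x (ast y z - ast z y) = ast y (prec x z) - prec (ast y x) z) ∧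
  (∀ x y z, ast (succ x y + prec x y) z = prec (ast x z) y + succ x (ast y z))

/-- A noncommutative pre-Poisson algebra is coherent if
`(x≻y + x≺y)∗z = x∗(y≻z) + y∗(z≺x)`. -/
def IsCoherentNCPrePoisson (K : Type*) [Field K] {A : Type*} [AddCommGroup A]
    [Module K A] (succ prec ast : A →ₗ[K] A →ₗ[K] A) : Prop :=
  IsNCPrePoisson K succ prec ast ∧
  (∀ x y z, ast (succ x y + prec x y) z = ast x (succ y z) + ast y (prec z x))

/-- for a noncommutative pre-Poisson algebra `(A, ≻, ≺, ∗)`, the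
triple `(A; L_≻, R_≺, L_∗)` is a representation of the sub-adjacent
noncommutative Poisson algebra `A^c` (with `x·y = x≻y + x≺y`,
`{x,y} = x∗y - y∗x`). -/
theorem subadjacent_rep {K A : Type*} [Field K] [CharZero K]
    [AddCommGroup A] [Module K A]
    (succ prec ast : A →ₗ[K] A →ₗ[K] A)
    (h : IsNCPrePoisson K succ prec ast) :
    IsRep K (succ + prec) (ast - ast.flip) succ prec.flip ast := by
  obtain ⟨⟨hd1, hd2, hd3⟩, hpl, h1, h2, h3⟩ := h
  refine ⟨⟨?_, ?_, ?_, ?_, ?_, ?_⟩, ?_⟩ <;> intro x y <;> ext z <;>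
    simp only [LinearMap.add_apply, LinearMap.sub_apply, LinearMap.flip_apply,
      Module.End.mul_apply, map_sub, map_add, Module.End.mul_apply]
  · have := hd3 x y z
    rw [map_add, LinearMap.add_apply] at this
    exact this.symm
  · have := hd1 z x y
    rw [map_add] at this
    exact this.symm
  · exact (hd2 x z y).symm
  · have := hpl x y z
    exact sub_eq_sub_iff_sub_eq_sub.mp this
  · have := h1 x y z
    rwa [map_sub, LinearMap.sub_apply] at this
  · have := h2 z x y
    rwa [map_sub] at this
  · have := h3 x y z
    rw [map_add, LinearMap.add_apply] at this
    rw [this, add_comm]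
end

section
/- Let (P,·,{-,-}) be a noncommutative Poisson algebra, (V;L,R,ρ) a representation of P, and T : V → P an 𝒪-operator, i.e. a linear map with T(u)·T(v) = T(L_{T(u)}v + R_{T(v)}u) and {T(u),T(v)} = T(ρ(T(u))v − ρ(T(v))u) for all u,v ∈ V. Define operations on V by u≻v = L_{T(u)}v, u≺v = R_{T(v)}u, u∗v = ρ(T(u))v. Then (V,≻,≺,∗) is a noncommutative pre-Poisson algebra, and T is a homomorphism of noncommutative Poisson algebras from the sub-adjacent algebra V^c (with u·_T v = u≻v + u≺v and {u,v}_T = u∗v − v∗u) to (P,·,{-,-}). Moreover, if the representation additionally satisfies ρ(x·y) = ρ(x)∘L_y + ρ(y)∘R_x for all x,y ∈ P, then (V,≻,≺,∗) is coherent, i.e. (u≻v + u≺v)∗w = u∗(v≻w) + v∗(w≺u) for all u,v,w ∈ V. -/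
open LinearMap Module

/-- an 𝒪-operator `T : V → P` on a noncommutative Poisson algebra
`(P, mul, br)` with respect to a representation `(V; L, R, ρ)` induces a
noncommutative pre-Poisson algebra structure on `V` via `u≻v = L_{T u} v`,
`u≺v = R_{T v} u`, `u∗v = ρ(T u) v`; moreover `T` is a homomorphism from the
sub-adjacent noncommutative Poisson algebra `V^c` to `P`, and if the
representation additionally satisfies `ρ(x·y) = ρ(x)∘L_y + ρ(y)∘R_x` then the
induced pre-Poisson algebra is coherent. -/
theorem Ooperator_gives_prePoisson {K P V : Type*} [Field K] [CharZero K]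
    [AddCommGroup P] [Module K P] [AddCommGroup V] [Module K V]
    (mul br : P →ₗ[K] P →ₗ[K] P) (L R ρ : P →ₗ[K] Module.End K V)
    (hP : IsNCPoisson K mul br) (hrep : IsRep K mul br L R ρ)
    (T : V →ₗ[K] P)
    (hTmul : ∀ u v, mul (T u) (T v) = T (L (T u) v + R (T v) u))
    (hTbr : ∀ u v, br (T u) (T v) = T (ρ (T u) v - ρ (T v) u)) :
    IsNCPrePoisson K (L ∘ₗ T) ((R ∘ₗ T).flip) (ρ ∘ₗ T) ∧
    (∀ u v, T (((L ∘ₗ T) + (R ∘ₗ T).flip) u v) = mul (T u) (T v)) ∧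
    (∀ u v, T (((ρ ∘ₗ T) - (ρ ∘ₗ T).flip) u v) = br (T u) (T v)) ∧
    ((∀ x y, ρ (mul x y) = ρ x * L y + ρ y * R x) →
      IsCoherentNCPrePoisson K (L ∘ₗ T) ((R ∘ₗ T).flip) (ρ ∘ₗ T)) := by
  obtain ⟨⟨hL, hR, hLR, hrho, hLbr, hRbr⟩, hrho_mul⟩ := hrep
  have key : ∀ u v : V, T (ρ (T u) v - ρ (T v) u) = br (T u) (T v) :=
    fun u v => (hTbr u v).symm
  have keym : ∀ u v : V, T (L (T u) v + R (T v) u) = mul (T u) (T v) :=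
    fun u v => (hTmul u v).symm
  have main : IsNCPrePoisson K (L ∘ₗ T) ((R ∘ₗ T).flip) (ρ ∘ₗ T) := by
    refine ⟨⟨?_, ?_, ?_⟩, ?_, ?_, ?_, ?_⟩
    · intro x y z
      simp only [LinearMap.comp_apply, LinearMap.flip_apply, LinearMap.add_apply,
        keym, hR, Module.End.mul_apply]
    · intro x y z
      simpa [LinearMap.comp_apply, LinearMap.flip_apply, Module.End.mul_apply] using
        (congrArg (fun f : Module.End K V => f y) (hLR (T x) (T z))).symm
    · intro x y z
      simp only [LinearMap.comp_apply, LinearMap.flip_apply, LinearMap.add_apply,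
        keym, hL, Module.End.mul_apply]
    · intro x y z
      simp only [LinearMap.comp_apply, LinearMap.flip_apply]
      have h : ρ (T (ρ (T x) y)) z - ρ (T (ρ (T y) x)) z
          = ρ (T x) (ρ (T y) z) - ρ (T y) (ρ (T x) z) := by
        have h2 : ρ (T (ρ (T x) y)) - ρ (T (ρ (T y) x)) = ρ (br (T x) (T y)) := by
          rw [← key, map_sub, map_sub]
        have h3 := congrArg (fun f : Module.End K V => f z) h2
        simp only [LinearMap.sub_apply] at h3
        rw [h3, hrho]
        simp [Module.End.mul_apply]
      rw [sub_eq_sub_iff_add_eq_add] at h ⊢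
      exact h.trans (add_comm _ _)
    · intro x y z
      simp only [LinearMap.comp_apply, LinearMap.flip_apply, LinearMap.sub_apply,
        key, hLbr, Module.End.mul_apply]
    · intro x y z
      simp only [LinearMap.comp_apply, LinearMap.flip_apply, LinearMap.sub_apply,
        key, hRbr, Module.End.mul_apply]
    · intro x y z
      simp only [LinearMap.comp_apply, LinearMap.flip_apply, LinearMap.add_apply,
        keym, hrho_mul, Module.End.mul_apply]
      abel
  refine ⟨main, ?_, ?_, ?_⟩
  · intro u v
    simp only [LinearMap.add_apply, LinearMap.comp_apply, LinearMap.flip_apply, keym]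
  · intro u v
    simp only [LinearMap.sub_apply, LinearMap.comp_apply, LinearMap.flip_apply, key]
  · intro hco
    refine ⟨main, ?_⟩
    intro x y z
    simp only [LinearMap.comp_apply, LinearMap.flip_apply, LinearMap.add_apply,
      keym, hco, Module.End.mul_apply]
end
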